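/- arXiv:1712.03838 — 7 statements merged into one kernel-verified Lean document; each statement's English description precedes it below -/
import Mathlib

section
/- Division with remainder principle: Let φ: R → R[z] be a G_a-coaction, s, a ∈ R, and let c ∈ R^{G_a} be the highest coefficient of φ(s) (of degree d = deg(s)). Then there exist r, b ∈ R and m ∈ ℕ such that c^m · a = r·s + b, with deg(r) ≤ deg(a) − deg(s) and deg(b) ≤ deg(s) − 1. -/
/-!
Pseudo-divide in `R[z]`: `c ^ m φ(a) = Q φ(s) + B` with `deg B < deg φ(s)`. Applying `φ`
coefficientwise and the translation `P(z) ↦ P(z + w)` to this identity gives two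
pseudo-divisions by the same polynomial `φ(φ(s)) = φ(s)(z + w)`, whose leading coefficient `c`
is invariant. Pseudo-division is unique up to a power of the leading coefficient, so `c ^ N Q`
and `c ^ N B` are fixed by the coaction, hence equal to `φ(r)` and `φ(b)` for their constant
terms `r` and `b`; since `φ` is injective, this gives `c ^ (N + m) a = r s + b`.
-/

open Polynomial

def IsGaCoaction {R : Type*} [CommRing R] (φ : R →+* Polynomial R) : Prop :=
  (∀ s : R, (φ s).eval 0 = s) ∧
  (∀ s : R, (φ s).map φ =
      (φ s).eval₂ ((Polynomial.C : Polynomial R →+* Polynomial (Polynomial R)).comp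
        Polynomial.C) (Polynomial.X + Polynomial.C Polynomial.X))

namespace Polynomial

variable {R : Type*} [CommRing R]

theorem degree_C_mul_le (a : R) (p : R[X]) : (C a * p).degree ≤ p.degree := by
  simpa only [smul_eq_C_mul] using degree_smul_le a p

theorem degree_lt_of_degree_le_of_coeff_eq_zero {p : R[X]} {n : ℕ} (hp : p.degree ≤ n)
    (hn : p.coeff n = 0) : p.degree < n := by
  rw [degree_lt_iff_coeff_zero]
  intro m hm
  rcases hm.eq_or_lt with rfl | hlt
  · exact hn
  · exact coeff_eq_zero_of_degree_lt (hp.trans_lt (by exact_mod_cast hlt))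

theorem leadingCoeff_mul_leadingCoeff_eq_zero_of_degree_mul_lt {P S : R[X]}
    (h : (P * S).degree < S.degree) : P.leadingCoeff * S.leadingCoeff = 0 := by
  rw [← coeff_mul_degree_add_degree]
  refine coeff_eq_zero_of_degree_lt (h.trans_le ?_)
  exact degree_le_natDegree.trans (by exact_mod_cast Nat.le_add_left _ _)

theorem exists_C_leadingCoeff_pow_mul_eq_zero {P S : R[X]} (h : (P * S).degree < S.degree) :
    ∃ N, C (S.leadingCoeff ^ N) * P = 0 := by
  induction hd : P.degree using WellFoundedLT.induction generalizing P with
  | ind d ih =>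
    subst hd
    rcases eq_or_ne P 0 with rfl | hP
    · exact ⟨0, mul_zero _⟩
    have hlt : (C S.leadingCoeff * P).degree < P.degree := by
      rw [degree_eq_natDegree hP]
      refine degree_lt_of_degree_le_of_coeff_eq_zero
        ((degree_C_mul_le _ _).trans degree_le_natDegree) ?_
      rw [coeff_C_mul, ← leadingCoeff, mul_comm,
        leadingCoeff_mul_leadingCoeff_eq_zero_of_degree_mul_lt h]
    obtain ⟨N, hN⟩ := ih _ hlt (by rw [mul_assoc]; exact (degree_C_mul_le _ _).trans_lt h) rfl
    exact ⟨N + 1, by rw [pow_succ, C_mul, mul_assoc]; exact hN⟩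

theorem exists_C_leadingCoeff_pow_mul_eq_mul_add (A : R[X]) {S : R[X]} (hS : S ≠ 0) :
    ∃ (m : ℕ) (Q B : R[X]), C (S.leadingCoeff ^ m) * A = Q * S + B ∧
      Q.degree + S.degree ≤ A.degree ∧ B.degree < S.degree := by
  induction hd : A.degree using WellFoundedLT.induction generalizing A with
  | ind d ih =>
    subst hd
    rcases lt_or_ge A.degree S.degree with hlt | hge
    · exact ⟨0, 0, A, by simp, by simp, hlt⟩
    have hA : A ≠ 0 := by rintro rfl; exact hS (degree_eq_bot.mp (le_bot_iff.mp hge))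
    have hk : S.natDegree + (A.natDegree - S.natDegree) = A.natDegree := by
      have := natDegree_le_natDegree (p := S) (q := A) hge; omega
    set L := C A.leadingCoeff * X ^ (A.natDegree - S.natDegree)
    have hL : L.degree + S.degree ≤ A.natDegree := by
      rw [degree_eq_natDegree hS, ← hk, add_comm S.natDegree, Nat.cast_add]
      exact add_le_add (degree_C_mul_X_pow_le _ _) le_rfl
    have hLS : (L * S).coeff A.natDegree = A.leadingCoeff * S.leadingCoeff := by
      rw [← hk, mul_assoc, coeff_C_mul, X_pow_mul, coeff_mul_X_pow, coeff_natDegree]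
    have hlt : (C S.leadingCoeff * A - L * S).degree < A.degree := by
      rw [degree_eq_natDegree hA]
      refine degree_lt_of_degree_le_of_coeff_eq_zero ((degree_sub_le _ _).trans (max_le
        ((degree_C_mul_le _ _).trans degree_le_natDegree) ((degree_mul_le _ _).trans hL))) ?_
      rw [coeff_sub, coeff_C_mul, hLS, ← leadingCoeff, mul_comm, sub_self]
    obtain ⟨m, Q, B, heq, hQ, hB⟩ := ih _ hlt _ rfl
    refine ⟨m + 1, Q + C (S.leadingCoeff ^ m) * L, B, ?_, ?_, hB⟩
    · rw [pow_succ, C_mul, mul_assoc]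
      linear_combination heq
    · refine (add_le_add (degree_add_le _ _) le_rfl).trans ?_
      rw [← max_add_add_right, degree_eq_natDegree hA]
      refine max_le ?_ ((add_le_add (degree_C_mul_le _ _) le_rfl).trans hL)
      exact hQ.trans (hlt.le.trans (degree_eq_natDegree hA).le)

theorem exists_C_leadingCoeff_pow_mul_eq_of_mul_add_eq {S Q Q' B B' : R[X]}
    (h : Q * S + B = Q' * S + B') (hB : B.degree < S.degree) (hB' : B'.degree < S.degree) :
    ∃ N, C (S.leadingCoeff ^ N) * Q = C (S.leadingCoeff ^ N) * Q' ∧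
      C (S.leadingCoeff ^ N) * B = C (S.leadingCoeff ^ N) * B' := by
  have hdiff : (Q - Q') * S = B' - B := by linear_combination h
  obtain ⟨N, hN⟩ := exists_C_leadingCoeff_pow_mul_eq_zero (P := Q - Q') (S := S)
    (by rw [hdiff]; exact (degree_sub_le _ _).trans_lt (max_lt hB' hB))
  have hN' : C (S.leadingCoeff ^ N) * (B' - B) = 0 := by rw [← hdiff, ← mul_assoc, hN, zero_mul]
  rw [mul_sub, sub_eq_zero] at hN hN'
  exact ⟨N, hN, hN'.symm⟩

/-- The comultiplication of the additive group, `P ↦ P(X + Y)`, where `Y = C X` is the inner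
variable of `R[X][X]`. -/
noncomputable def gaComul : R[X] →+* R[X][X] :=
  (taylorAlgHom (X : R[X])).toRingHom.comp (mapRingHom C)

theorem gaComul_apply (P : R[X]) : gaComul P = taylor X (P.map C) := rfl

theorem eval₂_X_add_C_X_eq_gaComul (P : R[X]) :
    P.eval₂ ((C : R[X] →+* R[X][X]).comp C) (X + C X) = gaComul P := by
  rw [gaComul_apply, taylor_apply, comp, eval₂_map]

theorem gaComul_C (a : R) : gaComul (C a) = C (C a) := by
  rw [gaComul_apply, map_C, taylor_C]

theorem degree_gaComul (P : R[X]) : (gaComul P).degree = P.degree := by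
  rw [gaComul_apply, degree_taylor, degree_map_eq_of_injective C_injective]

theorem leadingCoeff_gaComul (P : R[X]) : (gaComul P).leadingCoeff = C P.leadingCoeff := by
  rw [gaComul_apply, leadingCoeff_taylor, leadingCoeff_map_of_injective C_injective]

theorem natDegree_gaComul (P : R[X]) : (gaComul P).natDegree = P.natDegree :=
  natDegree_eq_natDegree (degree_gaComul P)

theorem coeff_gaComul_natDegree (P : R[X]) : (gaComul P).coeff P.natDegree = C P.leadingCoeff := by
  rw [← leadingCoeff_gaComul, leadingCoeff, natDegree_gaComul]

theorem eval_zero_gaComul (P : R[X]) : (gaComul P).eval 0 = P := by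
  rw [gaComul_apply, taylor_eval, zero_add, eval_map, eval₂_C_X]

theorem apply_coeff_zero_of_map_eq_gaComul {φ : R →+* R[X]} {P : R[X]}
    (h : P.map φ = gaComul P) : φ (P.coeff 0) = P := by
  conv_rhs => rw [← eval_zero_gaComul P, ← h]
  rw [← coeff_zero_eq_eval_zero, coeff_map]

end Polynomial

namespace IsGaCoaction

variable {R : Type*} [CommRing R] {φ : R →+* R[X]}

theorem map_apply_eq_gaComul (hφ : IsGaCoaction φ) (x : R) : (φ x).map φ = gaComul (φ x) := by
  rw [hφ.2, eval₂_X_add_C_X_eq_gaComul]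

theorem injective (hφ : IsGaCoaction φ) : Function.Injective φ :=
  Function.LeftInverse.injective (g := eval 0) hφ.1

theorem apply_leadingCoeff (hφ : IsGaCoaction φ) (s : R) :
    φ (φ s).leadingCoeff = C (φ s).leadingCoeff := by
  simpa only [coeff_map, coeff_natDegree, coeff_gaComul_natDegree] using
    congrArg (coeff · (φ s).natDegree) (hφ.map_apply_eq_gaComul s)

theorem exists_apply_eq_C_pow_mul (hφ : IsGaCoaction φ) {s a : R} {m : ℕ}
    {Q B : R[X]} (hdiv : C ((φ s).leadingCoeff ^ m) * φ a = Q * φ s + B)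
    (hB : B.degree < (φ s).degree) :
    ∃ (N : ℕ) (r b : R), φ r = C ((φ s).leadingCoeff ^ N) * Q ∧
      φ b = C ((φ s).leadingCoeff ^ N) * B := by
  set c := (φ s).leadingCoeff
  have hc : φ c = C c := hφ.apply_leadingCoeff s
  have hdiv' : gaComul Q * gaComul (φ s) + gaComul B = Q.map φ * gaComul (φ s) + B.map φ := by
    have hE := congrArg gaComul hdiv
    have hM := congrArg (map φ) hdiv
    rw [map_mul, map_add, map_mul, gaComul_C] at hE
    rw [Polynomial.map_mul, Polynomial.map_add, Polynomial.map_mul, map_C, map_pow, hc,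
      hφ.map_apply_eq_gaComul, hφ.map_apply_eq_gaComul] at hM
    rw [← hE, ← hM, C_pow]
  obtain ⟨N, hQ, hB⟩ := exists_C_leadingCoeff_pow_mul_eq_of_mul_add_eq hdiv'
    (by rwa [degree_gaComul, degree_gaComul])
    (by rw [degree_gaComul]; exact degree_map_le.trans_lt hB)
  rw [leadingCoeff_gaComul] at hQ hB
  have lift : ∀ P : R[X], C (C c ^ N) * gaComul P = C (C c ^ N) * P.map φ →
      φ ((C (c ^ N) * P).coeff 0) = C (c ^ N) * P := by
    intro P hP
    apply apply_coeff_zero_of_map_eq_gaComul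
    rw [Polynomial.map_mul, map_C, map_mul, gaComul_C, map_pow, hc]
    simpa only [C_pow] using hP.symm
  exact ⟨N, _, _, lift Q hQ, lift B hB⟩

theorem exists_leadingCoeff_pow_mul_eq_mul_add (hφ : IsGaCoaction φ) (s a : R) :
    ∃ (r b : R) (m : ℕ), (φ s).leadingCoeff ^ m * a = r * s + b ∧
      (φ r).degree + (φ s).degree ≤ (φ a).degree ∧ (b = 0 ∨ (φ b).degree < (φ s).degree) := by
  rcases eq_or_ne (φ s) 0 with hs | hs
  · exact ⟨0, 0, 1, by simp [hs], by simp, Or.inl rfl⟩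
  obtain ⟨m, Q, B, hdiv, hQ, hB⟩ := exists_C_leadingCoeff_pow_mul_eq_mul_add (φ a) hs
  obtain ⟨N, r, b, hr, hb⟩ := hφ.exists_apply_eq_C_pow_mul hdiv hB
  refine ⟨r, b, N + m, hφ.injective ?_, ?_, ?_⟩
  · rw [map_add, map_mul, map_mul, map_pow, hφ.apply_leadingCoeff, hr, hb, pow_add,
      mul_assoc, ← C_pow, ← C_pow, hdiv]
    ring
  · rw [hr]
    exact (add_le_add (degree_C_mul_le _ _) le_rfl).trans hQ
  · exact or_iff_not_imp_left.2 fun _ => hb ▸ (degree_C_mul_le _ _).trans_lt hB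

end IsGaCoaction

/-- division with remainder principle.  With `c` the highest coefficient of
`φ s` (which is an invariant), there are `r, b ∈ R` and `m ∈ ℕ` with `c^m * a = r*s + b`,
`deg r ≤ deg a - deg s` (stated additively, with the convention `deg 0 = -∞ = ⊥`) and
`deg b ≤ deg s - 1` (i.e. `b = 0` or `deg b < deg s`). -/
theorem stmt1 {K R : Type*} [CommRing K] [CommRing R] [Algebra K R]
    (φ : R →ₐ[K] Polynomial R) (hφ : IsGaCoaction φ.toRingHom)
    (s a : R) (c : R) (hc : c = (φ s).leadingCoeff) :
    ∃ (r b : R) (m : ℕ),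
      c ^ m * a = r * s + b ∧
      (φ r).degree + (φ s).degree ≤ (φ a).degree ∧
      (b = 0 ∨ (φ b).degree < (φ s).degree) :=
  hc ▸ hφ.exists_leadingCoeff_pow_mul_eq_mul_add s a
end

section
/- Let K be a commutative ring, n ≥ 2, R = K[x,y]/(y^n), with G_a-coaction φ(x̄) = x̄ + ȳ·z, φ(ȳ) = ȳ. Then for every 0 < d < n, the element s = x̄^d is a local slice of degree d with denominator c = ȳ^d, and the localization R_c is the zero ring; moreover every local slice in R has nilpotent denominator. -/
/-!
The coaction axioms are identities between ring homomorphisms out of `R`, so they can be checked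
on the images of `C k`, `x̄` and `ȳ`. The same check shows, as `ȳ` is nilpotent, that `φ` agrees
with the trivial coaction `s ↦ C s` modulo the nilradical, so every coefficient of positive
degree of `φ s` is nilpotent; by the counit property a non-invariant `s` has `φ s` of positive
degree, hence a nilpotent leading coefficient. For `0 < d < n` we have `ȳ ^ d ≠ 0`, so
`(x̄ + ȳ z) ^ d` has degree `d` and leading coefficient `ȳ ^ d`; the latter is nilpotent, so
inverting it yields the zero ring.
-/

open Polynomial

section Coaction

variable {A : Type*} [CommRing A]

theorem isGaCoaction_of_comp_eq (φ : A →+* A[X])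
    (hcounit : (evalRingHom 0).comp φ = RingHom.id A)
    (hcoassoc : (mapRingHom φ).comp φ = (eval₂RingHom (C.comp C) (X + C X)).comp φ) :
    IsGaCoaction φ :=
  ⟨RingHom.congr_fun hcounit, RingHom.congr_fun hcoassoc⟩

theorem Polynomial.coeff_mem_of_map_mk_eq_C {I : Ideal A} {p : A[X]} {a : A}
    (h : p.map (Ideal.Quotient.mk I) = C (Ideal.Quotient.mk I a)) {i : ℕ} (hi : i ≠ 0) :
    p.coeff i ∈ I := by
  rw [← Ideal.Quotient.eq_zero_iff_mem, ← coeff_map, h, coeff_C, if_neg hi]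

theorem isNilpotent_leadingCoeff_of_map_nilradical (φ : A →+* A[X])
    (hcounit : ∀ s, (φ s).eval 0 = s)
    (htriv : (mapRingHom (Ideal.Quotient.mk (nilradical A))).comp φ =
      C.comp (Ideal.Quotient.mk (nilradical A)))
    {s : A} (hs : φ s ≠ C s) : IsNilpotent (φ s).leadingCoeff := by
  have hdeg : (φ s).natDegree ≠ 0 :=
    mt eq_C_coeff_zero_iff_natDegree_eq_zero.mpr (by rwa [coeff_zero_eq_eval_zero, hcounit])
  exact mem_nilradical.mp (coeff_mem_of_map_mk_eq_C (RingHom.congr_fun htriv s) hdeg)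

end Coaction

section LinearPower

variable {A : Type*} [Semiring A] {a b : A} {d : ℕ}

theorem Polynomial.leadingCoeff_C_add_C_mul_X_pow (hd : d ≠ 0) (hb : b ^ d ≠ 0) :
    ((C a + C b * X) ^ d).leadingCoeff = b ^ d := by
  have hb0 : b ≠ 0 := ne_zero_pow hd hb
  rw [add_comm, leadingCoeff_pow' (by rwa [leadingCoeff_linear hb0]), leadingCoeff_linear hb0]

theorem Polynomial.degree_C_add_C_mul_X_pow (hd : d ≠ 0) (hb : b ^ d ≠ 0) :
    ((C a + C b * X) ^ d).degree = (d : WithBot ℕ) := by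
  have hb0 : b ≠ 0 := ne_zero_pow hd hb
  rw [add_comm, degree_pow' (by rwa [leadingCoeff_linear hb0]), degree_linear hb0, nsmul_one]

end LinearPower

theorem MvPolynomial.X_pow_notMem_span_X_pow {σ K : Type*} [CommSemiring K] [Nontrivial K]
    {i : σ} {d n : ℕ} (h : d < n) :
    (X i : MvPolynomial σ K) ^ d ∉ Ideal.span {X i ^ n} := by
  rw [Ideal.mem_span_singleton, X_pow_eq_monomial, X_pow_eq_monomial,
    monomial_one_dvd_monomial_one, Finsupp.single_le_single]
  omega

theorem MvPolynomial.ringHom_ext_of_surjective {σ K B S : Type*} [CommSemiring K]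
    [Semiring B] [Semiring S] {q : MvPolynomial σ K →+* B} (hq : Function.Surjective q)
    {f g : B →+* S} (hC : ∀ k, f (q (C k)) = g (q (C k)))
    (hX : ∀ i, f (q (X i)) = g (q (X i))) : f = g :=
  (RingHom.cancel_right hq).mp (MvPolynomial.ringHom_ext hC hX)

theorem stmt4_general {K : Type*} [CommRing K] [Nontrivial K] (n : ℕ)
    (q : MvPolynomial (Fin 2) K →+*
      MvPolynomial (Fin 2) K ⧸ Ideal.span {(MvPolynomial.X 1 : MvPolynomial (Fin 2) K) ^ n})
    (hq : q = Ideal.Quotient.mk (Ideal.span {(MvPolynomial.X 1 : MvPolynomial (Fin 2) K) ^ n}))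
    (φ : (MvPolynomial (Fin 2) K ⧸ Ideal.span {(MvPolynomial.X 1 : MvPolynomial (Fin 2) K) ^ n}) →+*
      Polynomial (MvPolynomial (Fin 2) K ⧸
        Ideal.span {(MvPolynomial.X 1 : MvPolynomial (Fin 2) K) ^ n}))
    (hx : φ (q (MvPolynomial.X 0)) =
      Polynomial.C (q (MvPolynomial.X 0)) + Polynomial.C (q (MvPolynomial.X 1)) * Polynomial.X)
    (hy : φ (q (MvPolynomial.X 1)) = Polynomial.C (q (MvPolynomial.X 1)))
    (hK : ∀ k : K, φ (q (MvPolynomial.C k)) = Polynomial.C (q (MvPolynomial.C k))) :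
    IsGaCoaction φ ∧
    (∀ d : ℕ, 0 < d → d < n →
      φ (q (MvPolynomial.X 0) ^ d) ≠ Polynomial.C (q (MvPolynomial.X 0) ^ d) ∧
      (φ (q (MvPolynomial.X 0) ^ d)).degree = d ∧
      (φ (q (MvPolynomial.X 0) ^ d)).leadingCoeff = q (MvPolynomial.X 1) ^ d ∧
      Subsingleton (Localization.Away (q (MvPolynomial.X 1) ^ d))) ∧
    (∀ s : MvPolynomial (Fin 2) K ⧸
        Ideal.span {(MvPolynomial.X 1 : MvPolynomial (Fin 2) K) ^ n},
      φ s ≠ Polynomial.C s → IsNilpotent ((φ s).leadingCoeff)) := by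
  have hq_surj : Function.Surjective q := hq ▸ Ideal.Quotient.mk_surjective
  have hy_nil : IsNilpotent (q (MvPolynomial.X 1)) :=
    ⟨n, by
      rw [hq, ← map_pow, Ideal.Quotient.eq_zero_iff_mem]
      exact Ideal.mem_span_singleton_self _⟩
  have hcounit : (evalRingHom 0).comp φ = RingHom.id _ :=
    MvPolynomial.ringHom_ext_of_surjective hq_surj (by simp [hK])
      (by simp [Fin.forall_fin_two, hx, hy])
  have hGa : IsGaCoaction φ :=
    isGaCoaction_of_comp_eq φ hcounit <| MvPolynomial.ringHom_ext_of_surjective hq_surj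
      (by simp [hK]) (by simp [Fin.forall_fin_two, hx, hy]; ring)
  have hy_mod_nil : Ideal.Quotient.mk (nilradical _) (q (MvPolynomial.X 1)) = 0 :=
    Ideal.Quotient.eq_zero_iff_mem.mpr (mem_nilradical.mpr hy_nil)
  have hnil : ∀ s, φ s ≠ C s → IsNilpotent (φ s).leadingCoeff := fun _ =>
    isNilpotent_leadingCoeff_of_map_nilradical φ (RingHom.congr_fun hcounit) <|
      MvPolynomial.ringHom_ext_of_surjective hq_surj (by simp [hK])
        (by simp [Fin.forall_fin_two, hx, hy, hy_mod_nil])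
  refine ⟨hGa, fun d hd0 hdn => ?_, hnil⟩
  have hyd : q (MvPolynomial.X 1) ^ d ≠ 0 := by
    rw [hq, ← map_pow, Ne, Ideal.Quotient.eq_zero_iff_mem]
    exact MvPolynomial.X_pow_notMem_span_X_pow hdn
  have hdeg := degree_C_add_C_mul_X_pow (a := q (MvPolynomial.X 0)) hd0.ne' hyd
  rw [map_pow, hx]
  refine ⟨fun h => ?_, hdeg, leadingCoeff_C_add_C_mul_X_pow hd0.ne' hyd,
    IsLocalization.subsingleton (isNilpotent_iff_zero_mem_powers.mp (hy_nil.pow_of_pos hd0.ne'))⟩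
  have hC := degree_C_le (a := q (MvPolynomial.X 0) ^ d)
  rw [← h, hdeg] at hC
  exact hd0.not_ge (by exact_mod_cast hC)

/-- on `R = K[x,y]/(y^n)` (with `n ≥ 2`), the coaction `φ(x̄) = x̄ + ȳ z`,
`φ(ȳ) = ȳ` is a `G_a`-coaction; for `0 < d < n` the element `s = x̄^d` is a local slice
of degree `d` with denominator `c = ȳ^d`, and the localization `R_c` is the zero ring
(so the local slice condition on `R_c` holds vacuously); moreover every local slice
(indeed every noninvariant) has nilpotent denominator (leading coefficient). -/
theorem stmt4 {K : Type*} [CommRing K] [Nontrivial K] (n : ℕ) (hn : 2 ≤ n)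
    (q : MvPolynomial (Fin 2) K →+*
      MvPolynomial (Fin 2) K ⧸ Ideal.span {(MvPolynomial.X 1 : MvPolynomial (Fin 2) K) ^ n})
    (hq : q = Ideal.Quotient.mk (Ideal.span {(MvPolynomial.X 1 : MvPolynomial (Fin 2) K) ^ n}))
    (φ : (MvPolynomial (Fin 2) K ⧸ Ideal.span {(MvPolynomial.X 1 : MvPolynomial (Fin 2) K) ^ n}) →+*
      Polynomial (MvPolynomial (Fin 2) K ⧸
        Ideal.span {(MvPolynomial.X 1 : MvPolynomial (Fin 2) K) ^ n}))
    (hx : φ (q (MvPolynomial.X 0)) =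
      Polynomial.C (q (MvPolynomial.X 0)) + Polynomial.C (q (MvPolynomial.X 1)) * Polynomial.X)
    (hy : φ (q (MvPolynomial.X 1)) = Polynomial.C (q (MvPolynomial.X 1)))
    (hK : ∀ k : K, φ (q (MvPolynomial.C k)) = Polynomial.C (q (MvPolynomial.C k))) :
    IsGaCoaction φ ∧
    (∀ d : ℕ, 0 < d → d < n →
      φ (q (MvPolynomial.X 0) ^ d) ≠ Polynomial.C (q (MvPolynomial.X 0) ^ d) ∧
      (φ (q (MvPolynomial.X 0) ^ d)).degree = d ∧
      (φ (q (MvPolynomial.X 0) ^ d)).leadingCoeff = q (MvPolynomial.X 1) ^ d ∧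
      Subsingleton (Localization.Away (q (MvPolynomial.X 1) ^ d))) ∧
    (∀ s : MvPolynomial (Fin 2) K ⧸
        Ideal.span {(MvPolynomial.X 1 : MvPolynomial (Fin 2) K) ^ n},
      φ s ≠ Polynomial.C s → IsNilpotent ((φ s).leadingCoeff)) :=
  stmt4_general n q hq φ hx hy hK
end

section
/- Local slice theorem, part (b): With s a local slice of degree d and denominator c, let ψ: R_c → (R_c)^{G_a}[x] be the inverse of x ↦ s, and π: R_c → (R_c)^{G_a} the composition of ψ with evaluation at x = 0. Then π is a surjective homomorphism of (R_c)^{G_a}-algebras with kernel the principal ideal (s), and for every a ∈ R_c, π(a) equals the remainder of φ(a) upon division by φ(s) in R_c[z] (the remainder having z-degree 0). -/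
/-!
Let `α = map φ` and let `β` be the substitution `z ↦ x + z`, two ring maps `A[z] → A[x][z]`
that agree on `φ(A)` by coassociativity. Divide `φ a = q φ(s) + r` with `deg r < deg φ(s)`.
Since `α φ(s) = β φ(s)` still has a unit leading coefficient, uniqueness of division forces
`α r = β r`, and setting `z = 0` gives `φ (r 0) = r`. So `r 0` has `φ`-degree below that of
`s`, hence is invariant by the slice hypothesis, and `r = r 0` is a constant. Uniqueness of
the constant remainder makes `a ↦ r 0` a ring endomorphism; it vanishes exactly on `(s)`
because `φ a = q φ(s)` evaluates at `z = 0` to `a = q(0) s`.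
-/

open Polynomial

namespace Polynomial
variable {A B : Type*} [CommRing A] [CommRing B]

lemma degree_eval₂_X_add_C_X_le (p : A[X]) :
    (p.eval₂ (C.comp C) (X + C X)).degree ≤ p.degree := by
  rcases eq_or_ne p 0 with rfl | hp
  · simp
  rw [degree_eq_natDegree hp, ← eval₂_map]
  refine degree_le_of_natDegree_le (natDegree_comp_le.trans ?_)
  calc _ ≤ p.natDegree * 1 := Nat.mul_le_mul natDegree_map_le
        (natDegree_add_le_of_degree_le natDegree_X_le ((natDegree_C _).le.trans zero_le_one))
    _ = p.natDegree := mul_one _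

@[simp] lemma eval_zero_eval₂_X_add_C_X (p : A[X]) :
    (p.eval₂ (C.comp C) (X + C X)).eval 0 = p := by
  induction p using Polynomial.induction_on' <;> simp_all [C_mul_X_pow_eq_monomial]

lemma eval₂_X_add_C_X_map (f : A →+* B) (p : A[X]) :
    (p.map f).eval₂ (C.comp C) (X + C X) =
      (p.eval₂ (C.comp C) (X + C X)).map (mapRingHom f) := by
  induction p using Polynomial.induction_on' <;> simp_all

lemma eq_of_mul_add_eq_mul_add_of_isUnit_leadingCoeff {p q q' r r' : A[X]}
    (hp : IsUnit p.leadingCoeff) (h : q * p + r = q' * p + r') (hr : r.degree < p.degree)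
    (hr' : r'.degree < p.degree) : r = r' := by
  by_contra hne
  have hq : q - q' ≠ 0 := by
    rintro hq
    exact hne (by linear_combination h - p * hq)
  have key : (q - q') * p = r' - r := by linear_combination h
  have hdeg : ((q - q') * p).degree = (q - q').degree + p.degree :=
    degree_mul' fun h0 => hq (leadingCoeff_eq_zero.mp (hp.mul_left_eq_zero.mp h0))
  have hle : p.degree ≤ (r' - r).degree := by
    rw [← key, hdeg]
    exact le_add_of_nonneg_left (zero_le_degree_iff.mpr hq)
  exact (hle.trans (degree_sub_le _ _)).not_gt (max_lt hr' hr)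

lemma exists_eq_mul_add_of_isUnit_leadingCoeff [Nontrivial A] {p : A[X]}
    (hp : IsUnit p.leadingCoeff) (f : A[X]) : ∃ q r, f = q * p + r ∧ r.degree < p.degree := by
  have hM := monic_of_isUnit_leadingCoeff_inv_smul hp
  refine ⟨hp.unit⁻¹ • (f /ₘ (hp.unit⁻¹ • p)), f %ₘ (hp.unit⁻¹ • p), ?_, ?_⟩
  · conv_lhs => rw [← modByMonic_add_div f (hp.unit⁻¹ • p)]
    simp only [Units.smul_def, smul_eq_C_mul]
    ring
  · have := degree_modByMonic_lt f hM
    rwa [degree_smul_of_smul_regular _ (isSMulRegular_of_group _)] at this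

end Polynomial

namespace IsGaCoaction

theorem of_isLocalization {R S : Type*} [CommRing R] [CommRing S] [Algebra R S]
    (M : Submonoid R) [IsLocalization M S] {φ : R →+* R[X]} (hφ : IsGaCoaction φ)
    {ψ : S →+* S[X]} (hψ : ∀ r, ψ (algebraMap R S r) = (φ r).map (algebraMap R S)) :
    IsGaCoaction ψ := by
  have hcounit : (evalRingHom 0).comp ψ = RingHom.id S :=
    IsLocalization.ringHom_ext M <| RingHom.ext fun r => by
      simp only [RingHom.comp_apply, coe_evalRingHom, hψ, eval_zero_map, hφ.1, RingHom.id_apply]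
  have hcoassoc : (mapRingHom ψ).comp ψ = (eval₂RingHom (C.comp C) (X + C X)).comp ψ :=
    IsLocalization.ringHom_ext M <| RingHom.ext fun r => by
      have hψ' : ψ.comp (algebraMap R S) = (mapRingHom (algebraMap R S)).comp φ :=
        RingHom.ext hψ
      simp only [RingHom.comp_apply, coe_mapRingHom, coe_eval₂RingHom, hψ]
      rw [eval₂_X_add_C_X_map, ← hφ.2, map_map, map_map, hψ']
  exact ⟨fun s => RingHom.congr_fun hcounit s, fun s => RingHom.congr_fun hcoassoc s⟩

variable {A : Type*} [CommRing A] {φ : A →+* A[X]} {s : A}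

theorem map_eval_zero_eq_of_eq_mul_add (hφ : IsGaCoaction φ) (hu : IsUnit (φ s).leadingCoeff)
    {a : A} {q r : A[X]} (h : φ a = q * φ s + r) (hr : r.degree < (φ s).degree) :
    φ (r.eval 0) = r := by
  have : Nontrivial A := nontrivial_iff.mp (nontrivial_of_ne _ _ (ne_zero_of_degree_gt hr))
  set α : A[X] →+* A[X][X] := mapRingHom φ
  set β : A[X] →+* A[X][X] := eval₂RingHom (C.comp C) (X + C X)
  have hαβ : ∀ b, α (φ b) = β (φ b) := hφ.2
  have hdeg : (α (φ s)).degree = (φ s).degree := degree_map_eq_of_isUnit_leadingCoeff _ hu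
  have hr' : α r = β r := by
    refine eq_of_mul_add_eq_mul_add_of_isUnit_leadingCoeff (q := α q) (q' := β q) ?_ ?_
      (hdeg ▸ degree_map_le.trans_lt hr) (hdeg ▸ (degree_eval₂_X_add_C_X_le r).trans_lt hr)
    · rw [coe_mapRingHom, leadingCoeff_map_eq_of_isUnit_leadingCoeff _ hu]
      exact hu.map φ
    · calc α q * α (φ s) + α r = α (φ a) := by rw [h, map_add, map_mul]
        _ = β (φ a) := hαβ a
        _ = β q * α (φ s) + β r := by rw [h, map_add, map_mul, hαβ]
  simpa [α, β, eval_zero_map] using congr_arg (eval 0) hr'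

theorem exists_eq_mul_add_C [Nontrivial A] (hφ : IsGaCoaction φ)
    (hu : IsUnit (φ s).leadingCoeff) (hslice : ∀ a, (φ a).degree < (φ s).degree → φ a = C a)
    (a : A) :
    ∃ q b, φ a = q * φ s + C b ∧ φ b = C b := by
  obtain ⟨q, r, h, hr⟩ := exists_eq_mul_add_of_isUnit_leadingCoeff hu (φ a)
  have hr' := map_eval_zero_eq_of_eq_mul_add hφ hu h hr
  have hinv := hslice (r.eval 0) (by rwa [hr'])
  exact ⟨q, r.eval 0, by rw [h, ← hinv, hr'], hinv⟩

theorem ker_eq_span_singleton (hφ : IsGaCoaction φ) {π : A →+* A}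
    (hπ : ∀ a, ∃ q, φ a = q * φ s + C (π a)) (hπs : π s = 0) :
    RingHom.ker π = Ideal.span {s} := by
  refine le_antisymm (fun a ha => ?_) ((Ideal.span_singleton_le_iff_mem _).mpr hπs)
  obtain ⟨q, hq⟩ := hπ a
  rw [RingHom.mem_ker.mp ha, map_zero, add_zero] at hq
  have := congr_arg (eval 0) hq
  rw [hφ.1, eval_mul, hφ.1] at this
  exact Ideal.mem_span_singleton'.mpr ⟨_, this.symm⟩

theorem exists_retraction (hφ : IsGaCoaction φ) (hu : IsUnit (φ s).leadingCoeff)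
    (hd : 0 < (φ s).degree) (hslice : ∀ a, (φ a).degree < (φ s).degree → φ a = C a) :
    ∃ π : A →+* A, (∀ a, φ (π a) = C (π a)) ∧ (∀ a, φ a = C a → π a = a) ∧
      RingHom.ker π = Ideal.span {s} ∧ ∀ a, ∃ q, φ a = q * φ s + C (π a) := by
  have : Nontrivial A :=
    nontrivial_iff.mp (nontrivial_of_ne (φ s) 0 fun h => by simp [h] at hd)
  choose q π hπ hinv using exists_eq_mul_add_C hφ hu hslice
  have hπ_unique {a : A} (q' : A[X]) {b : A} (h : φ a = q' * φ s + C b) : π a = b :=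
    C_injective <| eq_of_mul_add_eq_mul_add_of_isUnit_leadingCoeff hu ((hπ a).symm.trans h)
      (degree_C_le.trans_lt hd) (degree_C_le.trans_lt hd)
  let πhom : A →+* A :=
    { toFun := π
      map_one' := hπ_unique 0 (by simp)
      map_mul' := fun a b => hπ_unique (q a * q b * φ s + q a * C (π b) + C (π a) * q b)
        (by rw [map_mul, hπ a, hπ b, C_mul]; ring)
      map_zero' := hπ_unique 0 (by simp)
      map_add' := fun a b => hπ_unique (q a + q b)
        (by rw [map_add, hπ a, hπ b, C_add]; ring) }
  refine ⟨πhom, hinv, fun a ha => hπ_unique 0 (by simpa using ha), ?_, fun a => ⟨q a, hπ a⟩⟩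
  exact ker_eq_span_singleton hφ (fun a => ⟨q a, hπ a⟩) (hπ_unique 1 (by simp))

end IsGaCoaction

/-- local slice theorem, part (b): there is a retraction
`π : R_c → (R_c)^{G_a}` (here given as a ring endomorphism of `R_c` landing in the
invariants and restricting to the identity on them, hence a surjective homomorphism of
`(R_c)^{G_a}`-algebras onto the invariants), whose kernel is the principal ideal `(s)`,
and such that for every `a`, `π(a)` is the remainder (of `z`-degree `0`) of the division
of `φ(a)` by `φ(s)` in `R_c[z]`. -/
theorem stmt6 {K R : Type*} [CommRing K] [CommRing R] [Algebra K R]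
    (φ : R →ₐ[K] Polynomial R) (hφ : IsGaCoaction φ.toRingHom)
    (s : R) (hs : φ s ≠ Polynomial.C s)
    (c : R) (hc : c = (φ s).leadingCoeff)
    (φc : Localization.Away c →+* Polynomial (Localization.Away c))
    (hext : ∀ r : R, φc (algebraMap R (Localization.Away c) r) =
      (φ r).map (algebraMap R (Localization.Away c)))
    (hslice : ∀ a : Localization.Away c,
      (φc a).degree < (φ s).degree → φc a = Polynomial.C a) :
    ∃ π : Localization.Away c →+* Localization.Away c,
      (∀ a : Localization.Away c, φc (π a) = Polynomial.C (π a)) ∧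
      (∀ a : Localization.Away c, φc a = Polynomial.C a → π a = a) ∧
      RingHom.ker π = Ideal.span {algebraMap R (Localization.Away c) s} ∧
      (∀ a : Localization.Away c, ∃ q : Polynomial (Localization.Away c),
        φc a = q * φc (algebraMap R (Localization.Away c) s) + Polynomial.C (π a)) := by
  -- `c` may be nilpotent, in which case `R_c` is the zero ring.
  rcases subsingleton_or_nontrivial (Localization.Away c) with _ | _
  · exact ⟨RingHom.id _, fun _ => Subsingleton.elim _ _, fun _ _ => Subsingleton.elim _ _,
      Subsingleton.elim _ _, fun _ => ⟨0, Subsingleton.elim _ _⟩⟩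
  have hunit : IsUnit (algebraMap R (Localization.Away c) (φ s).leadingCoeff) :=
    hc ▸ IsLocalization.Away.algebraMap_isUnit c
  have hd : 0 < (φ s).degree := by
    refine lt_of_not_ge fun h => hs ?_
    rw [eq_C_of_degree_le_zero h, coeff_zero_eq_eval_zero]
    exact congr_arg C (hφ.1 s)
  have hlc : (φc (algebraMap R _ s)).leadingCoeff = algebraMap R _ (φ s).leadingCoeff := by
    rw [hext, leadingCoeff_map_of_leadingCoeff_ne_zero _ hunit.ne_zero]
  have hdeg : (φc (algebraMap R _ s)).degree = (φ s).degree := by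
    rw [hext, degree_map_eq_of_leadingCoeff_ne_zero _ hunit.ne_zero]
  exact (hφ.of_isLocalization (Submonoid.powers c) hext).exists_retraction (hlc ▸ hunit)
    (hdeg ▸ hd) (hdeg ▸ hslice)
end

section
/- Local slice theorem, part (c): With s a local slice of degree d and denominator c, and π: R_c → (R_c)^{G_a} as above, the composition R_c → R_c[z] → (R_c)^{G_a}[z] of φ followed by coefficientwise π is an injective ring homomorphism, and it makes (R_c)^{G_a}[z] into an R_c-module generated by d elements (the images of 1, z, ..., z^{d−1}). In particular if d = 1 it is an isomorphism. -/
open Polynomial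

/-!
Write `Φ a` for `π` applied coefficientwise to `φ a`, and `h = Φ s`: a polynomial of degree `d`
with unit leading coefficient whose coefficients are invariant. If `Φ a = 0`, the constant
term gives `π a = 0`, so `a = s b`; since `h` is not a zero divisor, `Φ b = 0`, while
`deg φ(a) = d + deg φ(b)`, so induction on `deg φ(a)` gives `a = 0`. For generation, the
`Φ(R_c)`-span of `1, z, …, z^(d-1)` contains `z^d = u⁻¹ (h - lower terms)` (`u` the leading
coefficient of `h`), hence is stable under multiplication by `z`; so it contains every polynomial
with invariant coefficients, an invariant `b` being its own image `Φ b = C b`.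
-/

namespace Polynomial

variable {A : Type*} [CommRing A]

theorem X_pow_natDegree_mem_span_X_pow (S : Subring A[X]) {h : A[X]} (hh : h ∈ S)
    (hcoeff : ∀ j, C (h.coeff j) ∈ S) {e : A} (he : C e ∈ S) (heh : e * h.leadingCoeff = 1)
    (hd : 0 < h.natDegree) :
    X ^ h.natDegree ∈
      Submodule.span S (Set.range fun i : Fin h.natDegree => (X : A[X]) ^ (i : ℕ)) := by
  set d := h.natDegree
  have hX : ∀ j < d, (X : A[X]) ^ j ∈
      Submodule.span S (Set.range fun i : Fin d => (X : A[X]) ^ (i : ℕ)) :=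
    fun j hj => Submodule.subset_span ⟨⟨j, hj⟩, rfl⟩
  have hsplit : C h.leadingCoeff * X ^ d = h - ∑ j ∈ Finset.range d, C (h.coeff j) * X ^ j := by
    have hsum := h.as_sum_range_C_mul_X_pow
    rw [Finset.sum_range_succ] at hsum
    rw [leadingCoeff]
    linear_combination -hsum
  have hXd : (X : A[X]) ^ d = (⟨C e, he⟩ : S) • (C h.leadingCoeff * X ^ d) := by
    rw [Subring.smul_def, smul_eq_mul, ← mul_assoc, ← C_mul, heh, C_1, one_mul]
  rw [hXd, hsplit]
  refine Submodule.smul_mem _ _ (sub_mem ?_ (Submodule.sum_mem _ fun j hj => ?_))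
  · simpa only [Subring.smul_def, smul_eq_mul, pow_zero, mul_one] using
      Submodule.smul_mem _ (⟨h, hh⟩ : S) (hX 0 hd)
  · exact Submodule.smul_mem _ (⟨C (h.coeff j), hcoeff j⟩ : S) (hX j (Finset.mem_range.mp hj))

theorem X_pow_mem_span_X_pow (S : Subring A[X]) {h : A[X]} (hh : h ∈ S)
    (hcoeff : ∀ j, C (h.coeff j) ∈ S) {e : A} (he : C e ∈ S) (heh : e * h.leadingCoeff = 1)
    (hd : 0 < h.natDegree) (n : ℕ) :
    X ^ n ∈ Submodule.span S (Set.range fun i : Fin h.natDegree => (X : A[X]) ^ (i : ℕ)) := by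
  set M := Submodule.span S (Set.range fun i : Fin h.natDegree => (X : A[X]) ^ (i : ℕ))
  have hXmul : ∀ p ∈ M, X * p ∈ M := by
    intro p hp
    induction hp using Submodule.span_induction with
    | mem _ hx =>
      obtain ⟨i, rfl⟩ := hx
      rw [← pow_succ']
      rcases (Nat.add_one_le_of_lt i.isLt).lt_or_eq with hi | hi
      · exact Submodule.subset_span ⟨⟨i + 1, hi⟩, rfl⟩
      · rw [hi]
        exact X_pow_natDegree_mem_span_X_pow S hh hcoeff he heh hd
    | zero => simp
    | add _ _ _ _ hx hy => simpa only [mul_add] using add_mem hx hy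
    | smul a _ _ hx => simpa only [Subring.smul_def, smul_eq_mul, mul_left_comm] using
        Submodule.smul_mem _ a hx
  induction n with
  | zero => exact Submodule.subset_span ⟨⟨0, hd⟩, rfl⟩
  | succ n ih => simpa only [pow_succ'] using hXmul _ ih

theorem mem_span_X_pow_of_C_coeff_mem (S : Subring A[X]) {h : A[X]} (hh : h ∈ S)
    (hcoeff : ∀ j, C (h.coeff j) ∈ S) {e : A} (he : C e ∈ S) (heh : e * h.leadingCoeff = 1)
    (hd : 0 < h.natDegree) {p : A[X]} (hp : ∀ i, C (p.coeff i) ∈ S) :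
    p ∈ Submodule.span S (Set.range fun i : Fin h.natDegree => (X : A[X]) ^ (i : ℕ)) := by
  rw [p.as_sum_range_C_mul_X_pow]
  exact Submodule.sum_mem _ fun i _ =>
    Submodule.smul_mem _ (⟨_, hp i⟩ : S) (X_pow_mem_span_X_pow S hh hcoeff he heh hd i)

end Polynomial

section Coaction

variable {A : Type*} [CommRing A] {Δ : A →+* A[X]} {π : A →+* A}

theorem map_apply_eq_C_of_apply_eq_C (hπid : ∀ a, Δ a = C a → π a = a) {a : A}
    (ha : Δ a = C a) : (Δ a).map π = C a := by
  rw [ha, map_C, hπid a ha]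

theorem exists_eq_mul_of_map_apply_eq_zero (hcounit : ∀ a, (Δ a).eval 0 = a) {t : A}
    (hker : RingHom.ker π = Ideal.span {t}) (ht : IsUnit ((Δ t).map π).leadingCoeff)
    {a : A} (ha : (Δ a).map π = 0) : ∃ b, a = t * b ∧ (Δ b).map π = 0 := by
  have hπa : a ∈ RingHom.ker π := by
    rw [RingHom.mem_ker, ← hcounit a, ← coeff_zero_eq_eval_zero, ← coeff_map, ha, coeff_zero]
  rw [hker, Ideal.mem_span_singleton] at hπa
  obtain ⟨b, rfl⟩ := hπa
  refine ⟨b, rfl, (isUnit_leadingCoeff_mul_right_eq_zero_iff ht).mp ?_⟩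
  rw [← Polynomial.map_mul, ← map_mul, ha]

theorem injective_map_apply_of_ker_eq_span [Nontrivial A] (hcounit : ∀ a, (Δ a).eval 0 = a)
    {t : A} (hker : RingHom.ker π = Ideal.span {t}) (ht : IsUnit (Δ t).leadingCoeff)
    (hdeg : 0 < (Δ t).natDegree) : Function.Injective fun a => (Δ a).map π := by
  have htπ : IsUnit ((Δ t).map π).leadingCoeff := by
    rw [leadingCoeff_map_eq_of_isUnit_leadingCoeff π ht]
    exact ht.map π
  suffices ∀ n a, (Δ a).natDegree = n → (Δ a).map π = 0 → a = 0 from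
    (injective_iff_map_eq_zero ((mapRingHom π).comp Δ)).mpr fun a => this _ a rfl
  intro n
  induction n using Nat.strong_induction_on with
  | _ n ih =>
    intro a hn ha
    obtain ⟨b, rfl, hb⟩ := exists_eq_mul_of_map_apply_eq_zero hcounit hker htπ ha
    by_contra htb
    have hb0 : b ≠ 0 := right_ne_zero_of_mul htb
    have hΔb : Δ b ≠ 0 := fun h0 => hb0 (by rw [← hcounit b, h0, eval_zero])
    have hdeg_mul : (Δ (t * b)).natDegree = (Δ t).natDegree + (Δ b).natDegree := by
      rw [map_mul, natDegree_mul' (ht.mul_right_eq_zero.not.mpr (leadingCoeff_ne_zero.mpr hΔb))]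
    exact hb0 (ih _ (by omega) b rfl hb)

theorem exists_eq_sum_map_apply_mul_X_pow [Nontrivial A] (hπinv : ∀ a, Δ (π a) = C (π a))
    (hπid : ∀ a, Δ a = C a → π a = a) {t : A} (ht : IsUnit (Δ t).leadingCoeff)
    (hdeg : 0 < (Δ t).natDegree) {p : A[X]} (hp : ∀ i, Δ (p.coeff i) = C (p.coeff i)) :
    ∃ f : Fin (Δ t).natDegree → A, p = ∑ i, (Δ (f i)).map π * X ^ (i : ℕ) := by
  set Φ := (mapRingHom π).comp Δ
  have hC_mem : ∀ a, Δ a = C a → C a ∈ Φ.range :=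
    fun a ha => ⟨a, map_apply_eq_C_of_apply_eq_C hπid ha⟩
  have hCπ_mem : ∀ a, C (π a) ∈ Φ.range := fun a => hC_mem _ (hπinv a)
  have hnat : ((Δ t).map π).natDegree = (Δ t).natDegree :=
    natDegree_map_eq_of_isUnit_leadingCoeff π ht
  have hinv : π ↑ht.unit⁻¹ * ((Δ t).map π).leadingCoeff = 1 := by
    rw [leadingCoeff_map_eq_of_isUnit_leadingCoeff π ht, ← map_mul, ht.val_inv_mul, map_one]
  have hmem := mem_span_X_pow_of_C_coeff_mem Φ.range (h := (Δ t).map π) ⟨t, rfl⟩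
    (fun j => by rw [coeff_map]; exact hCπ_mem _) (hCπ_mem _) hinv (hnat ▸ hdeg)
    (fun i => hC_mem _ (hp i))
  rw [hnat, Submodule.mem_span_range_iff_exists_fun] at hmem
  obtain ⟨g, hg⟩ := hmem
  choose f hf using fun i => (g i).2
  refine ⟨f, hg ▸ Finset.sum_congr rfl fun i _ => ?_⟩
  rw [Subring.smul_def, smul_eq_mul, ← hf i]
  rfl

end Coaction

theorem IsLocalization.eval_zero_apply_of_eval_zero_apply {R S : Type*} [CommRing R]
    [CommRing S] [Algebra R S] (M : Submonoid R) [IsLocalization M S] {φ : R →+* R[X]}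
    (hφ : ∀ r, (φ r).eval 0 = r) {Δ : S →+* S[X]}
    (hext : ∀ r, Δ (algebraMap R S r) = (φ r).map (algebraMap R S)) (a : S) :
    (Δ a).eval 0 = a := by
  have : (evalRingHom 0).comp Δ = RingHom.id S :=
    IsLocalization.ringHom_ext M <| RingHom.ext fun r => by
      simp only [RingHom.comp_apply, coe_evalRingHom, hext, eval_zero_map, hφ, RingHom.id_apply]
  exact congrArg (· a) this

theorem stmt7_general {K R : Type*} [CommRing K] [CommRing R] [Algebra K R]
    (φ : R →ₐ[K] Polynomial R) (hφ : IsGaCoaction φ.toRingHom)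
    (s : R) (hs : φ s ≠ Polynomial.C s)
    (d : ℕ) (hd : (φ s).degree = (d : ℕ))
    (c : R) (hc : c = (φ s).leadingCoeff)
    (φc : Localization.Away c →+* Polynomial (Localization.Away c))
    (hext : ∀ r : R, φc (algebraMap R (Localization.Away c) r) =
      (φ r).map (algebraMap R (Localization.Away c)))
    (π : Localization.Away c →+* Localization.Away c)
    (hπinv : ∀ a : Localization.Away c, φc (π a) = Polynomial.C (π a))
    (hπid : ∀ a : Localization.Away c, φc a = Polynomial.C a → π a = a)
    (hπker : RingHom.ker π = Ideal.span {algebraMap R (Localization.Away c) s}) :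
    Function.Injective (fun a : Localization.Away c => (φc a).map π) ∧
    (∀ p : Polynomial (Localization.Away c),
      (∀ i : ℕ, φc (p.coeff i) = Polynomial.C (p.coeff i)) →
      ∃ f : Fin d → Localization.Away c,
        p = ∑ i : Fin d, (φc (f i)).map π * Polynomial.X ^ (i : ℕ)) ∧
    (d = 1 → ∀ p : Polynomial (Localization.Away c),
      (∀ i : ℕ, φc (p.coeff i) = Polynomial.C (p.coeff i)) →
      ∃ a : Localization.Away c, p = (φc a).map π) := by
  rcases subsingleton_or_nontrivial (Localization.Away c) with _ | _
  · exact ⟨Function.injective_of_subsingleton _, fun _ _ => ⟨0, Subsingleton.elim _ _⟩,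
      fun _ _ _ => ⟨0, Subsingleton.elim _ _⟩⟩
  have hcounit := IsLocalization.eval_zero_apply_of_eval_zero_apply (.powers c) hφ.1 hext
  have hd0 : 0 < d := by
    rw [Nat.pos_iff_ne_zero]
    rintro rfl
    refine hs ((eq_C_of_degree_le_zero hd.le).trans ?_)
    rw [coeff_zero_eq_eval_zero]
    exact congrArg C (hφ.1 s)
  have hlc : algebraMap R (Localization.Away c) (φ s).leadingCoeff ≠ 0 :=
    hc ▸ (IsLocalization.Away.algebraMap_isUnit c).ne_zero
  have ht : IsUnit (φc (algebraMap R _ s)).leadingCoeff := by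
    rw [hext, leadingCoeff_map_of_leadingCoeff_ne_zero _ hlc, ← hc]
    exact IsLocalization.Away.algebraMap_isUnit c
  have htdeg : (φc (algebraMap R _ s)).natDegree = d := by
    rw [hext, natDegree_map_of_leadingCoeff_ne_zero _ hlc, natDegree_eq_of_degree_eq_some hd]
  have hdeg : 0 < (φc (algebraMap R _ s)).natDegree := htdeg ▸ hd0
  have hgen : ∀ p : Polynomial (Localization.Away c),
      (∀ i : ℕ, φc (p.coeff i) = C (p.coeff i)) →
      ∃ f : Fin d → Localization.Away c,
        p = ∑ i : Fin d, (φc (f i)).map π * X ^ (i : ℕ) :=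
    fun p hp => htdeg ▸ exists_eq_sum_map_apply_mul_X_pow hπinv hπid ht hdeg hp
  refine ⟨injective_map_apply_of_ker_eq_span hcounit hπker ht hdeg, hgen, ?_⟩
  rintro rfl p hp
  obtain ⟨f, hf⟩ := hgen p hp
  exact ⟨f 0, by simpa using hf⟩

/-- local slice theorem, part (c): with `π : R_c → (R_c)^{G_a}` the
retraction of part (b), the composition `R_c → R_c[z] → (R_c)^{G_a}[z]` of `φc` followed
by coefficientwise `π` is injective, and every polynomial with invariant coefficients is
an `R_c`-linear combination (via this map) of `1, z, …, z^{d-1}`; in particular for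
`d = 1` the map is onto the polynomials with invariant coefficients, hence an
isomorphism onto `(R_c)^{G_a}[z]`. -/
theorem stmt7 {K R : Type*} [CommRing K] [CommRing R] [Algebra K R]
    (φ : R →ₐ[K] Polynomial R) (hφ : IsGaCoaction φ.toRingHom)
    (s : R) (hs : φ s ≠ Polynomial.C s)
    (d : ℕ) (hd : (φ s).degree = (d : ℕ))
    (c : R) (hc : c = (φ s).leadingCoeff)
    (φc : Localization.Away c →+* Polynomial (Localization.Away c))
    (hext : ∀ r : R, φc (algebraMap R (Localization.Away c) r) =
      (φ r).map (algebraMap R (Localization.Away c)))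
    (hslice : ∀ a : Localization.Away c,
      (φc a).degree < (φ s).degree → φc a = Polynomial.C a)
    (π : Localization.Away c →+* Localization.Away c)
    (hπinv : ∀ a : Localization.Away c, φc (π a) = Polynomial.C (π a))
    (hπid : ∀ a : Localization.Away c, φc a = Polynomial.C a → π a = a)
    (hπker : RingHom.ker π = Ideal.span {algebraMap R (Localization.Away c) s}) :
    Function.Injective (fun a : Localization.Away c => (φc a).map π) ∧
    (∀ p : Polynomial (Localization.Away c),
      (∀ i : ℕ, φc (p.coeff i) = Polynomial.C (p.coeff i)) →
      ∃ f : Fin d → Localization.Away c,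
        p = ∑ i : Fin d, (φc (f i)).map π * Polynomial.X ^ (i : ℕ)) ∧
    (d = 1 → ∀ p : Polynomial (Localization.Away c),
      (∀ i : ℕ, φc (p.coeff i) = Polynomial.C (p.coeff i)) →
      ∃ a : Localization.Away c, p = (φc a).map π) :=
  stmt7_general φ hφ s hs d hd c hc φc hext π hπinv hπid hπker
end

section
/- Let K be a field in which −1 is not a square. There do not exist polynomials f, g, h ∈ K[x] with h ≠ 0 such that f² + g² = x·h². (Hence the quotient of the SO₂-action on the affine plane by x₁² + x₂² has no cross section.) -/
/-!
Since `-1` is not a square, the leading coefficients of `f²` and `g²` cannot cancel, so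
`f² + g²` has even degree, while `x·h²` has odd degree.
-/

open Polynomial

theorem sq_add_sq_ne_zero_of_not_isSquare_neg_one {K : Type*} [Field K]
    (hK : ¬ IsSquare (-1 : K)) {a : K} (ha : a ≠ 0) (b : K) : a ^ 2 + b ^ 2 ≠ 0 := by
  intro h
  exact hK ⟨b / a, by field_simp; linear_combination -h⟩

theorem even_natDegree_sq_add_sq {K : Type*} [Field K] (hK : ¬ IsSquare (-1 : K))
    (f g : K[X]) : Even (f ^ 2 + g ^ 2).natDegree := by
  rcases eq_or_ne f 0 with rfl | hf
  · simp [natDegree_pow]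
  have hdeg : (f ^ 2 + g ^ 2).degree = max (f ^ 2).degree (g ^ 2).degree := by
    refine degree_add_eq_of_leadingCoeff_add_ne_zero ?_
    simpa only [leadingCoeff_pow] using
      sq_add_sq_ne_zero_of_not_isSquare_neg_one hK (leadingCoeff_ne_zero.2 hf) g.leadingCoeff
  rcases le_total (g ^ 2).degree (f ^ 2).degree with hle | hle
  · rw [natDegree_eq_of_degree_eq (hdeg.trans (max_eq_left hle)), natDegree_pow]
    exact even_two_mul _
  · rw [natDegree_eq_of_degree_eq (hdeg.trans (max_eq_right hle)), natDegree_pow]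
    exact even_two_mul _

/-- if `-1` is not a square in the field `K`, then there are no polynomials
`f, g, h ∈ K[x]` with `h ≠ 0` and `f² + g² = x·h²`.  (Hence the quotient of the
`SO₂`-action on the affine plane given by `x₁² + x₂²` has no cross section.) -/
theorem stmt10 {K : Type*} [Field K] (hK : ¬ IsSquare (-1 : K)) :
    ¬ ∃ f g h : Polynomial K, h ≠ 0 ∧ f ^ 2 + g ^ 2 = Polynomial.X * h ^ 2 := by
  rintro ⟨f, g, h, hh, heq⟩
  have hodd : Odd (X * h ^ 2).natDegree := by
    rw [natDegree_X_mul (pow_ne_zero 2 hh), natDegree_pow]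
    exact odd_two_mul_add_one _
  exact Nat.not_even_iff_odd.2 hodd (heq ▸ even_natDegree_sq_add_sq hK f g)
end

section
/- Existence of local slices for G_m-actions: Let Φ: R → R[t^{±1}] be a nontrivial coaction of the multiplicative group G_m on a commutative K-algebra R. Then there exists a nonzero semi-invariant c ∈ R and an element s ∈ R_c such that s is a local slice: s is an invertible semi-invariant of weight t^{−d} for some d > 0, and every a ∈ R_c of degree < d lies in (R_c)^{G_m}. -/
open LaurentPolynomial

/-- A (co)action of the multiplicative group `G_m` on `Spec R`, given by a ring
homomorphism `Φ : R → R[t,t⁻¹]`: substituting `t = 1` is the identity, and applying `Φ`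
coefficientwise to `Φ a` equals substituting `t ↦ s·t` in `Φ a`. -/
def IsGmCoaction {R : Type*} [CommRing R] (Φ : R →+* LaurentPolynomial R) : Prop :=
  (∀ a : R, (Φ a).coeff.sum (fun _ r => r) = a) ∧
  (∀ a : R, Finsupp.mapRange ⇑Φ (map_zero Φ) (Φ a).coeff =
    (Φ a).coeff.sum fun k r => Finsupp.single k (LaurentPolynomial.C r * LaurentPolynomial.T k))

/-!
For a nonzero semi-invariant `c`, the weights of the invertible semi-invariants of `R_c` form a
subgroup of `ℤ`, which only grows when `c` is multiplied by another semi-invariant. A nonzero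
component of `Φ a` in degree `k` is a semi-invariant of weight `k`, so a nontrivial coaction
gives some `R_c` with a positive such weight; take `c` realising the least possible one, `d`,
and `s` an invertible semi-invariant of weight `-d` on `R_c`. If `a ∈ R_c` had a nonzero
component in degree `j` with `0 < |j| < d`, clearing denominators would turn it into a
semi-invariant `r` of `R` with `c r ≠ 0`, and on `R_{c r}` both `d` and `j`, hence
`gcd(d, j) < d`, would be weights of units, against minimality. So `Φ a` lives in degree `0`,
and the counit gives `Φ a = a`.
-/

namespace LaurentPolynomial

variable {S : Type*} [CommRing S]

theorem coeff_mul_C_mul_T (p : S[T;T⁻¹]) (u : S) (m j : ℤ) :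
    (p * (C u * T m)).coeff j = p.coeff (j - m) * u := by
  rw [← single_eq_C_mul_T]
  exact AddMonoidAlgebra.coeff_mul_single_apply p u m j

theorem eq_C_coeff_zero_of_coeff_eq_zero {p : S[T;T⁻¹]} (h : ∀ j ≠ 0, p.coeff j = 0) :
    p = C (p.coeff 0) := by
  ext j
  rcases eq_or_ne j 0 with rfl | hj
  · simp
  · rw [h j hj, ← single_eq_C, AddMonoidAlgebra.coeff_single, Finsupp.single_eq_of_ne hj]

theorem eval₂_id_one (p : S[T;T⁻¹]) :
    eval₂ (RingHom.id S) 1 p = p.coeff.sum fun _ r => r := by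
  induction p using LaurentPolynomial.induction_on' with
  | add p q hp hq =>
    rw [map_add, hp, hq, AddMonoidAlgebra.coeff_add, Finsupp.sum_add_index' (fun _ => rfl)
      (fun _ _ _ => rfl)]
  | C_mul_T n a =>
    rw [eval₂_C_mul_T, ← single_eq_C_mul_T, AddMonoidAlgebra.coeff_single,
      Finsupp.sum_single_index rfl, one_zpow, Units.val_one, mul_one, RingHom.id_apply]

end LaurentPolynomial

theorem AddSubgroup.int_gcd_mem {H : AddSubgroup ℤ} {a b : ℤ} (ha : a ∈ H) (hb : b ∈ H) :
    (Int.gcd a b : ℤ) ∈ H := by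
  rw [Int.gcd_eq_gcd_ab, mul_comm a, mul_comm b]
  exact add_mem (zsmul_mem ha _) (zsmul_mem hb _)

namespace GmCoaction

section SemiInvariant

variable {S : Type*} [CommRing S] {ψ : S →+* S[T;T⁻¹]}

def IsSemiInvariant (ψ : S →+* S[T;T⁻¹]) (w : ℤ) (a : S) : Prop :=
  ψ a = C a * T w

theorem IsSemiInvariant.mul {a b : S} {v w : ℤ} (ha : IsSemiInvariant ψ v a)
    (hb : IsSemiInvariant ψ w b) : IsSemiInvariant ψ (v + w) (a * b) := by
  rw [IsSemiInvariant, map_mul, ha, hb, map_mul, T_add]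
  ring

theorem IsSemiInvariant.pow {a : S} {w : ℤ} (ha : IsSemiInvariant ψ w a) (n : ℕ) :
    IsSemiInvariant ψ (n * w) (a ^ n) := by
  rw [IsSemiInvariant, map_pow, ha, mul_pow, ← map_pow, T_pow]

theorem IsSemiInvariant.units_inv {u : Sˣ} {w : ℤ} (hu : IsSemiInvariant ψ w u) :
    IsSemiInvariant ψ (-w) ↑u⁻¹ := by
  refine left_inv_eq_right_inv (a := ψ u) ?_ ?_
  · rw [← map_mul, Units.inv_mul, map_one]
  · rw [hu, mul_mul_mul_comm, ← map_mul, ← T_add, Units.mul_inv, add_neg_cancel, map_one,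
      T_zero, one_mul]

def unitWeights (ψ : S →+* S[T;T⁻¹]) : AddSubgroup ℤ where
  carrier := {w | ∃ u : Sˣ, IsSemiInvariant ψ w u}
  zero_mem' := ⟨1, by rw [IsSemiInvariant, Units.val_one, map_one, map_one, T_zero, one_mul]⟩
  add_mem' := fun ⟨u, hu⟩ ⟨v, hv⟩ => ⟨u * v, hu.mul hv⟩
  neg_mem' := fun ⟨u, hu⟩ => ⟨u⁻¹, hu.units_inv⟩

theorem eq_C_of_coeff_eq_zero (hψ : ∀ a, (ψ a).coeff.sum (fun _ r => r) = a) {a : S}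
    (h : ∀ j ≠ 0, (ψ a).coeff j = 0) : ψ a = C a := by
  have hψa := eq_C_coeff_zero_of_coeff_eq_zero h
  have := hψ a
  rw [hψa, ← single_eq_C, AddMonoidAlgebra.coeff_single, Finsupp.sum_single_index rfl] at this
  rwa [this] at hψa

end SemiInvariant

variable {R : Type*} [CommRing R] {φ : R →+* R[T;T⁻¹]}

theorem isSemiInvariant_coeff (hφ : IsGmCoaction φ) (a : R) (k : ℤ) :
    IsSemiInvariant φ k ((φ a).coeff k) := by
  classical
  have h := congr($(hφ.2 a) k)
  rw [Finsupp.mapRange_apply, Finsupp.sum_apply] at h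
  simp only [Finsupp.single_apply, Finsupp.sum_ite_eq'] at h
  rw [IsSemiInvariant, h]
  split_ifs with hk
  · rfl
  · rw [Finsupp.notMem_support_iff.mp hk, map_zero, zero_mul]

theorem exists_coeff_ne_zero (hφ : IsGmCoaction φ) {a : R} (ha : φ a ≠ C a) :
    ∃ k ≠ 0, (φ a).coeff k ≠ 0 := by
  by_contra! h
  exact ha (eq_C_of_coeff_eq_zero hφ.1 h)

/-- Generated by the weights of the semi-invariants of `R` that become units in `R_c`. -/
def weightGroup (φ : R →+* R[T;T⁻¹]) (c : R) : AddSubgroup ℤ :=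
  AddSubgroup.closure {k | ∃ r : R, ∃ n : ℕ, IsSemiInvariant φ k r ∧ r ∣ c ^ n}

theorem mem_weightGroup_of_dvd {c r : R} {k : ℤ} (hr : IsSemiInvariant φ k r) (hrc : r ∣ c) :
    k ∈ weightGroup φ c :=
  AddSubgroup.subset_closure ⟨r, 1, hr, by rwa [pow_one]⟩

theorem weightGroup_mono {c c' : R} (h : c ∣ c') : weightGroup φ c ≤ weightGroup φ c' :=
  AddSubgroup.closure_mono fun _ ⟨r, n, hr, hrc⟩ =>
    ⟨r, n, hr, hrc.trans (pow_dvd_pow_of_dvd h n)⟩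

def IsLocalUnitWeight (φ : R →+* R[T;T⁻¹]) (d : ℤ) : Prop :=
  ∃ c : R, c ≠ 0 ∧ (∃ w, IsSemiInvariant φ w c) ∧ d ∈ weightGroup φ c

theorem exists_pos_isLocalUnitWeight (hφ : IsGmCoaction φ) (hnontriv : ∃ a, φ a ≠ C a) :
    ∃ d : ℕ, 0 < d ∧ IsLocalUnitWeight φ d := by
  obtain ⟨a, ha⟩ := hnontriv
  obtain ⟨k, hk, hak⟩ := exists_coeff_ne_zero hφ ha
  have hsi := isSemiInvariant_coeff hφ a k
  have hkc : k ∈ weightGroup φ ((φ a).coeff k) := mem_weightGroup_of_dvd hsi dvd_rfl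
  refine ⟨k.natAbs, Int.natAbs_pos.mpr hk, _, hak, ⟨k, hsi⟩, ?_⟩
  rw [Int.natCast_natAbs]
  exact abs_mem_iff.mpr hkc

def ExtendsTo (φ : R →+* R[T;T⁻¹]) {S : Type*} [CommRing S] [Algebra R S]
    (ψ : S →+* S[T;T⁻¹]) : Prop :=
  ∀ r : R, (ψ (algebraMap R S r)).coeff =
    Finsupp.mapRange (algebraMap R S) (map_zero (algebraMap R S)) (φ r).coeff

variable {S : Type*} [CommRing S] [Algebra R S] {ψ : S →+* S[T;T⁻¹]}

theorem ExtendsTo.coeff_algebraMap (hψ : ExtendsTo φ ψ) (r : R) (k : ℤ) :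
    (ψ (algebraMap R S r)).coeff k = algebraMap R S ((φ r).coeff k) := by
  rw [hψ r, Finsupp.mapRange_apply]

theorem IsSemiInvariant.algebraMap (hψ : ExtendsTo φ ψ) {r : R} {w : ℤ}
    (hr : IsSemiInvariant φ w r) : IsSemiInvariant ψ w (algebraMap R S r) := by
  rw [IsSemiInvariant, ← AddMonoidAlgebra.coeff_inj, hψ r, hr, ← single_eq_C_mul_T,
    ← single_eq_C_mul_T, AddMonoidAlgebra.coeff_single, AddMonoidAlgebra.coeff_single,
    Finsupp.mapRange_single]

theorem ExtendsTo.coeff_sum (hφ : IsGmCoaction φ) (hψ : ExtendsTo φ ψ) (M : Submonoid R)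
    [IsLocalization M S] (x : S) : (ψ x).coeff.sum (fun _ r => r) = x := by
  have h : (eval₂ (RingHom.id S) 1).comp ψ = RingHom.id S := by
    refine IsLocalization.ringHom_ext M (RingHom.ext fun r => ?_)
    simp only [RingHom.coe_comp, Function.comp_apply, RingHom.id_apply, eval₂_id_one]
    rw [hψ r, Finsupp.sum_mapRange_index (fun _ => rfl), ← map_finsuppSum, hφ.1 r]
  simpa only [RingHom.comp_apply, eval₂_id_one, RingHom.id_apply] using RingHom.congr_fun h x

variable {c : R} [IsLocalization.Away c S]

theorem weightGroup_le_unitWeights (hψ : ExtendsTo φ ψ) : weightGroup φ c ≤ unitWeights ψ := by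
  refine (AddSubgroup.closure_le _).mpr fun k ⟨r, n, hr, hrc⟩ => ?_
  have hu : IsUnit (algebraMap R S r) :=
    (IsLocalization.Away.algebraMap_isUnit_iff c).mpr ⟨n, hrc⟩
  exact ⟨hu.unit, hr.algebraMap hψ⟩

theorem exists_coeff_mul_pow_eq (hφ : IsGmCoaction φ) (hψ : ExtendsTo φ ψ) {w : ℤ}
    (hc : IsSemiInvariant φ w c) (x : S) (k : ℤ) :
    ∃ (n : ℕ) (r : R), IsSemiInvariant φ (k + n * w) r ∧
      (ψ x).coeff k * algebraMap R S c ^ n = algebraMap R S r := by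
  obtain ⟨n, a, hxa⟩ := IsLocalization.Away.surj c x
  refine ⟨n, (φ a).coeff (k + n * w), isSemiInvariant_coeff hφ a _, ?_⟩
  have hcn : IsSemiInvariant ψ (n * w) (algebraMap R S c ^ n) := (hc.algebraMap hψ).pow n
  rw [← hψ.coeff_algebraMap, ← hxa, map_mul, hcn, coeff_mul_C_mul_T, add_sub_cancel_right]

theorem exists_mem_weightGroup_of_coeff_ne_zero (hφ : IsGmCoaction φ) (hψ : ExtendsTo φ ψ)
    {w : ℤ} (hc : IsSemiInvariant φ w c) {x : S} {j : ℤ} (hj : (ψ x).coeff j ≠ 0) :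
    ∃ c' : R, c' ≠ 0 ∧ (∃ w', IsSemiInvariant φ w' c') ∧
      weightGroup φ c ≤ weightGroup φ c' ∧ j ∈ weightGroup φ c' := by
  obtain ⟨n, r, hr, hxr⟩ := exists_coeff_mul_pow_eq hφ hψ hc x j
  have hcu := IsLocalization.Away.algebraMap_isUnit (S := S) c
  refine ⟨c * r, fun h0 => hj ?_, ⟨_, hc.mul hr⟩, weightGroup_mono (dvd_mul_right c r), ?_⟩
  · have : algebraMap R S c * ((ψ x).coeff j * algebraMap R S c ^ n) = 0 := by
      rw [hxr, ← map_mul, h0, map_zero]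
    rwa [hcu.mul_right_eq_zero, (hcu.pow n).mul_left_eq_zero] at this
  · have hnw : (n : ℤ) * w ∈ weightGroup φ (c * r) := by
      simpa only [nsmul_eq_mul] using
        nsmul_mem (mem_weightGroup_of_dvd hc (dvd_mul_right c r)) n
    simpa using sub_mem (mem_weightGroup_of_dvd hr (dvd_mul_left r c)) hnw

theorem coeff_eq_zero_of_abs_lt (hφ : IsGmCoaction φ) (hψ : ExtendsTo φ ψ) {w : ℤ}
    (hc : IsSemiInvariant φ w c) {d : ℕ} (hd : (d : ℤ) ∈ weightGroup φ c)
    (hmin : ∀ m : ℕ, 0 < m → IsLocalUnitWeight φ m → d ≤ m) (x : S) {j : ℤ} (hj : j ≠ 0)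
    (hjd : |j| < d) : (ψ x).coeff j = 0 := by
  by_contra hxj
  obtain ⟨c', hc', hsi, hle, hjc'⟩ := exists_mem_weightGroup_of_coeff_ne_zero hφ hψ hc hxj
  have hgcd := hmin _ (Int.gcd_pos_of_ne_zero_right _ hj)
    ⟨c', hc', hsi, AddSubgroup.int_gcd_mem (hle hd) hjc'⟩
  have : (Int.gcd d j : ℤ) ≤ |j| :=
    Int.le_of_dvd (abs_pos.mpr hj) ((Int.gcd_dvd_right _ _).trans (self_dvd_abs j))
  omega

end GmCoaction

open GmCoaction

/-- a nontrivial `G_m`-coaction admits a local slice: there is a nonzero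
semi-invariant `c ∈ R` (of some weight `t^w`), a degree `d > 0`, and an element `s` of
the localization `R_c` (with the canonically extended coaction `Φc`) such that `s` is an
invertible semi-invariant of weight `t^{-d}` and every element of `R_c` of degree `< d`
is invariant. -/
theorem stmt12 {K R : Type*} [CommRing K] [CommRing R] [Algebra K R]
    (Φ : R →ₐ[K] LaurentPolynomial R) (hΦ : IsGmCoaction Φ.toRingHom)
    (hnontriv : ∃ a : R, Φ a ≠ LaurentPolynomial.C a) :
    ∃ c : R, c ≠ 0 ∧ (∃ w : ℤ, Φ c = LaurentPolynomial.C c * LaurentPolynomial.T w) ∧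
      ∃ d : ℤ, 0 < d ∧
        ∀ Φc : Localization.Away c →+* LaurentPolynomial (Localization.Away c),
          (∀ r : R, (Φc (algebraMap R (Localization.Away c) r)).coeff =
            Finsupp.mapRange (algebraMap R (Localization.Away c))
              (map_zero (algebraMap R (Localization.Away c))) (Φ r).coeff) →
          ∃ s : Localization.Away c,
            IsUnit s ∧
            Φc s = LaurentPolynomial.C s * LaurentPolynomial.T (-d) ∧
            ∀ a : Localization.Away c,
              (∀ k : ℤ, d ≤ |k| → (Φc a).coeff k = 0) → Φc a = LaurentPolynomial.C a := by
  classical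
  have hP := exists_pos_isLocalUnitWeight hΦ hnontriv
  obtain ⟨hd, c, hc, ⟨w, hcw⟩, hdc⟩ := Nat.find_spec hP
  refine ⟨c, hc, ⟨w, hcw⟩, Nat.find hP, by exact_mod_cast hd, fun Φc hΦc => ?_⟩
  have hext : ExtendsTo Φ.toRingHom Φc := hΦc
  obtain ⟨s, hs⟩ := neg_mem (weightGroup_le_unitWeights hext hdc)
  refine ⟨s, s.isUnit, hs, fun a ha => ?_⟩
  refine eq_C_of_coeff_eq_zero (hext.coeff_sum hΦ (.powers c)) fun j hj => ?_
  rcases le_or_gt (Nat.find hP : ℤ) |j| with hjd | hjd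
  · exact ha j hjd
  · exact coeff_eq_zero_of_abs_lt hΦ hext hcw hdc
      (fun m hm hmw => Nat.find_min' hP ⟨hm, hmw⟩) a hj hjd
end

section
/- Multiplicative local slice theorem, part (a): Let Φ: R → R[t^{±1}] be a nontrivial G_m-coaction and s ∈ R_c a local slice of degree d with denominator c (a nonzero semi-invariant). Then the (R_c)^{G_m}-algebra homomorphism (R_c)^{G_m}[y^{±1}] → R_c from the Laurent polynomial ring sending y to s is an isomorphism. -/
/-!
Both coaction axioms are identities between ring homomorphisms out of `R`, so they pass to the
localization `R_c`. Coassociativity makes every coefficient `a_k` of `Φc a` semi-invariant of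
weight `k`; multiplying by `s ^ (k / d)` brings the weight into `[0, d)`, where the slice
condition forces invariance, and the counit identity `a = Σ a_k` then writes `a` as a Laurent
polynomial in `s` with invariant coefficients. Injectivity: the weight `-k d` component of
`Σ p_k s ^ k` is `p_k s ^ k`.
-/

open LaurentPolynomial

/-- The invariant subring `A^{G_m} = ker(Φc - id)`. -/
noncomputable def invGmSubring {A : Type*} [CommRing A] (Φc : A →+* LaurentPolynomial A) :
    Subring A :=
  RingHom.eqLocus Φc (LaurentPolynomial.C : A →+* LaurentPolynomial A)

namespace LaurentPolynomial

variable {R S : Type*} [CommSemiring R] [CommSemiring S]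

theorem eval₂_single (f : R →+* S) (x : Sˣ) (k : ℤ) (r : R) :
    eval₂ f x (.single k r) = f r * ↑(x ^ k) := by
  rw [single_eq_C_mul_T, eval₂_C_mul_T]

theorem eval₂_eq_sum (f : R →+* S) (x : Sˣ) (p : R[T;T⁻¹]) :
    eval₂ f x p = p.coeff.sum fun k r => f r * ↑(x ^ k) := by
  conv_lhs => rw [← AddMonoidAlgebra.sum_coeff_single p, map_finsuppSum]
  simp only [eval₂_single]

theorem eval₂_one_comp_mapRingHom (f : R →+* S) :
    (eval₂ (RingHom.id S) 1).comp (AddMonoidAlgebra.mapRingHom ℤ f) =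
      f.comp (eval₂ (RingHom.id R) 1) := by
  refine AddMonoidAlgebra.ringHom_ext (fun _ => ?_) (fun _ => ?_) <;>
    simp only [RingHom.comp_apply, AddMonoidAlgebra.mapRingHom_single, eval₂_single, one_zpow,
      Units.val_one, mul_one, map_one, RingHom.id_apply]

variable (R) in
/-- The comultiplication `T^k ↦ T^k ⊗ T^k` of the Hopf algebra `R[T;T⁻¹]` of `G_m`, with the
second tensor factor written as the outer variable. -/
noncomputable def diagonal : R[T;T⁻¹] →+* R[T;T⁻¹][T;T⁻¹] :=
  AddMonoidAlgebra.liftNCRingHom (C.comp C)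
    (C.toMonoidHom.comp (AddMonoidAlgebra.of R ℤ) * AddMonoidAlgebra.of R[T;T⁻¹] ℤ)
    fun _ _ => Commute.all _ _

theorem diagonal_single (k : ℤ) (r : R) :
    diagonal R (.single k r) = .single k (.single k r) := by
  rw [diagonal, AddMonoidAlgebra.liftNCRingHom_single]
  simp [single_eq_C_mul_T, mul_assoc]

theorem coeff_diagonal (p : R[T;T⁻¹]) :
    (diagonal R p).coeff = p.coeff.sum fun k r => Finsupp.single k (C r * T k) := by
  conv_lhs => rw [← AddMonoidAlgebra.sum_coeff_single p, map_finsuppSum,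
    AddMonoidAlgebra.coeff_finsuppSum]
  simp only [diagonal_single, AddMonoidAlgebra.coeff_single, ← single_eq_C_mul_T]

theorem coeff_diagonal_apply (p : R[T;T⁻¹]) (k : ℤ) :
    (diagonal R p).coeff k = C (p.coeff k) * T k := by
  classical
  simp only [coeff_diagonal, Finsupp.sum_apply, Finsupp.single_apply, Finsupp.sum_ite_eq']
  split_ifs with hk
  · rfl
  · rw [Finsupp.notMem_support_iff.mp hk, map_zero, zero_mul]

theorem diagonal_comp_mapRingHom (f : R →+* S) :
    (diagonal S).comp (AddMonoidAlgebra.mapRingHom ℤ f) =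
      (AddMonoidAlgebra.mapRingHom ℤ (AddMonoidAlgebra.mapRingHom ℤ f)).comp (diagonal R) := by
  refine AddMonoidAlgebra.ringHom_ext (fun _ => ?_) (fun _ => ?_) <;>
    simp only [RingHom.comp_apply, AddMonoidAlgebra.mapRingHom_single, diagonal_single]

end LaurentPolynomial

section Coaction

variable {A : Type*} [CommRing A]

/-- Counit and coassociativity axioms of a coaction, as identities of ring homomorphisms. -/
theorem isGmCoaction_iff (φ : A →+* A[T;T⁻¹]) :
    IsGmCoaction φ ↔ (eval₂ (RingHom.id A) 1).comp φ = RingHom.id A ∧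
      (AddMonoidAlgebra.mapRingHom ℤ φ).comp φ = (diagonal A).comp φ := by
  simp only [IsGmCoaction, RingHom.ext_iff, RingHom.comp_apply, RingHom.id_apply, eval₂_eq_sum,
    one_zpow, Units.val_one, mul_one, ← AddMonoidAlgebra.coeff_inj, coeff_diagonal]
  rfl

theorem IsGmCoaction.of_localization {R : Type*} [CommRing R] [Algebra R A]
    (M : Submonoid R) [IsLocalization M A] {Φ : R →+* R[T;T⁻¹]} (hΦ : IsGmCoaction Φ)
    (Ψ : A →+* A[T;T⁻¹])
    (hΨ : Ψ.comp (algebraMap R A) = (AddMonoidAlgebra.mapRingHom ℤ (algebraMap R A)).comp Φ) :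
    IsGmCoaction Ψ := by
  rw [isGmCoaction_iff] at hΦ ⊢
  obtain ⟨hcounit, hcoassoc⟩ := hΦ
  constructor
  · refine IsLocalization.ringHom_ext M ?_
    rw [RingHom.comp_assoc, hΨ, ← RingHom.comp_assoc, eval₂_one_comp_mapRingHom,
      RingHom.comp_assoc, hcounit]
    rfl
  · refine IsLocalization.ringHom_ext M ?_
    rw [RingHom.comp_assoc, RingHom.comp_assoc, hΨ, ← RingHom.comp_assoc, ← RingHom.comp_assoc,
      diagonal_comp_mapRingHom, ← AddMonoidAlgebra.mapRingHom_comp, hΨ,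
      AddMonoidAlgebra.mapRingHom_comp, RingHom.comp_assoc, RingHom.comp_assoc, hcoassoc]

variable (φ : A →+* A[T;T⁻¹])

def IsSemiInvariant (a : A) (m : ℤ) : Prop :=
  φ a = C a * T m

variable {φ}

theorem mem_invGmSubring_iff {a : A} : a ∈ invGmSubring φ ↔ IsSemiInvariant φ a 0 := by
  rw [IsSemiInvariant, T_zero, mul_one]
  rfl

theorem IsSemiInvariant.coeff_apply {a : A} {m : ℤ} (ha : IsSemiInvariant φ a m) (k : ℤ) :
    (φ a).coeff k = if m = k then a else 0 := by
  classical
  rw [ha, ← single_eq_C_mul_T, AddMonoidAlgebra.coeff_single, Finsupp.single_apply]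

theorem IsSemiInvariant.mul {a b : A} {m n : ℤ} (ha : IsSemiInvariant φ a m)
    (hb : IsSemiInvariant φ b n) : IsSemiInvariant φ (a * b) (m + n) := by
  rw [IsSemiInvariant, map_mul, ha, hb, map_mul, T_add]
  ring

theorem IsSemiInvariant.units_inv {u : Aˣ} {m : ℤ} (hu : IsSemiInvariant φ u m) :
    IsSemiInvariant φ ↑u⁻¹ (-m) := by
  refine left_inv_eq_right_inv (a := φ u) ?_ ?_
  · rw [← map_mul, Units.inv_mul, map_one]
  · rw [hu, mul_mul_mul_comm, ← map_mul, Units.mul_inv, ← T_add, add_neg_cancel, T_zero,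
      map_one, one_mul]

theorem IsSemiInvariant.units_zpow {u : Aˣ} {m : ℤ} (hu : IsSemiInvariant φ u m) (n : ℤ) :
    IsSemiInvariant φ ↑(u ^ n) (n * m) := by
  induction n using Int.induction_on with
  | zero => rw [zpow_zero, zero_mul, ← mem_invGmSubring_iff, Units.val_one]; exact one_mem _
  | succ n ih =>
    rw [zpow_add_one, Units.val_mul, add_mul, one_mul]
    exact ih.mul hu
  | pred n ih =>
    rw [zpow_sub_one, Units.val_mul, sub_mul, one_mul, sub_eq_add_neg]
    exact ih.mul hu.units_inv

theorem IsGmCoaction.isSemiInvariant_coeff (hφ : IsGmCoaction φ) (a : A) (k : ℤ) :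
    IsSemiInvariant φ ((φ a).coeff k) k := by
  have h := congrArg (·.coeff k) (RingHom.congr_fun ((isGmCoaction_iff φ).mp hφ).2 a)
  simp only [RingHom.comp_apply, AddMonoidAlgebra.coeff_mapRingHom, coeff_diagonal_apply] at h
  exact h

end Coaction

section LocalSlice

variable {A : Type*} [CommRing A] {φ : A →+* A[T;T⁻¹]} {d : ℤ} {u : Aˣ}

/-- A local slice of degree `d`, given as a unit `u`; `deg a < d` means that `φ a` has no
coefficient at any `k` with `d ≤ |k|`. -/
structure IsLocalSlice (φ : A →+* A[T;T⁻¹]) (d : ℤ) (u : Aˣ) : Prop where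
  pos : 0 < d
  isSemiInvariant : IsSemiInvariant φ u (-d)
  map_eq_C_of_deg_lt : ∀ a : A, (∀ k : ℤ, d ≤ |k| → (φ a).coeff k = 0) → φ a = C a

theorem IsLocalSlice.mem_invGmSubring_of_abs_lt (hs : IsLocalSlice φ d u) {b : A} {m : ℤ}
    (hb : IsSemiInvariant φ b m) (hm : |m| < d) : b ∈ invGmSubring φ :=
  hs.map_eq_C_of_deg_lt b fun k hk => by
    rw [hb.coeff_apply, if_neg]
    rintro rfl
    exact hk.not_gt hm

/-- `u ^ (k / d)` moves a semi-invariant of weight `k` to weight `k % d ∈ [0, d)`, where the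
slice condition makes it invariant. -/
theorem IsLocalSlice.mul_zpow_ediv_mem_invGmSubring (hs : IsLocalSlice φ d u) {b : A} {k : ℤ}
    (hb : IsSemiInvariant φ b k) : b * ↑(u ^ (k / d)) ∈ invGmSubring φ := by
  have hrem : IsSemiInvariant φ (b * ↑(u ^ (k / d))) (k % d) := by
    convert hb.mul (hs.isSemiInvariant.units_zpow (k / d)) using 1
    rw [Int.emod_def]
    ring
  refine hs.mem_invGmSubring_of_abs_lt hrem ?_
  rw [abs_of_nonneg (Int.emod_nonneg k hs.pos.ne')]
  exact Int.emod_lt_of_pos k hs.pos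

theorem coeff_map_eval₂_subtype (hd : d ≠ 0) (hu : IsSemiInvariant φ u (-d))
    (p : (invGmSubring φ)[T;T⁻¹]) (k : ℤ) :
    (φ (eval₂ (invGmSubring φ).subtype u p)).coeff (k * -d) = p.coeff k * ↑(u ^ k) := by
  have hterm (j : ℤ) (r : invGmSubring φ) :
      IsSemiInvariant φ ((invGmSubring φ).subtype r * ↑(u ^ j)) (j * -d) := by
    have h := (mem_invGmSubring_iff.mp r.2).mul (hu.units_zpow j)
    rw [zero_add] at h
    exact h
  rw [eval₂_eq_sum, map_finsuppSum, AddMonoidAlgebra.coeff_finsuppSum, Finsupp.sum_apply,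
    Finsupp.sum_eq_single k]
  · rw [(hterm k _).coeff_apply, if_pos rfl]
    rfl
  · intro j _ hj
    rw [(hterm j _).coeff_apply, if_neg (fun h => hj (mul_right_cancel₀ (neg_ne_zero.mpr hd) h))]
  · intro _
    rw [(hterm k 0).coeff_apply, map_zero, zero_mul, ite_self]

theorem eval₂_subtype_injective (hd : d ≠ 0) (hu : IsSemiInvariant φ u (-d)) :
    Function.Injective (eval₂ (invGmSubring φ).subtype u) := by
  intro p q h
  ext k : 2
  have hk := congrArg (fun x => (φ x).coeff (k * -d)) h
  simp only [coeff_map_eval₂_subtype hd hu] at hk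
  exact (Units.mul_left_inj _).mp hk

/-- The coefficient `a_k` of `φ a` has weight `k`, so it is the invariant `a_k u ^ (k / d)`
times `u ^ (-(k / d))`; the counit sums the `a_k` back to `a`. -/
theorem IsLocalSlice.eval₂_subtype_surjective (hs : IsLocalSlice φ d u) (hφ : IsGmCoaction φ) :
    Function.Surjective (eval₂ (invGmSubring φ).subtype u) := by
  intro a
  let b (k : ℤ) : invGmSubring φ :=
    ⟨(φ a).coeff k * ↑(u ^ (k / d)),
      hs.mul_zpow_ediv_mem_invGmSubring (hφ.isSemiInvariant_coeff a k)⟩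
  refine ⟨(φ a).coeff.sum fun k _ => .single (-(k / d)) (b k), ?_⟩
  rw [map_finsuppSum]
  conv_rhs => rw [← hφ.1 a]
  refine Finsupp.sum_congr fun k _ => ?_
  rw [eval₂_single, Subring.coe_subtype, mul_assoc, ← Units.val_mul, ← zpow_add,
    add_neg_cancel, zpow_zero, Units.val_one, mul_one]

theorem IsLocalSlice.eval₂_subtype_bijective (hs : IsLocalSlice φ d u) (hφ : IsGmCoaction φ) :
    Function.Bijective (eval₂ (invGmSubring φ).subtype u) :=
  ⟨eval₂_subtype_injective hs.pos.ne' hs.isSemiInvariant, hs.eval₂_subtype_surjective hφ⟩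

end LocalSlice

theorem stmt13_general {K R : Type*} [CommRing K] [CommRing R] [Algebra K R]
    (Φ : R →ₐ[K] LaurentPolynomial R) (hΦ : IsGmCoaction Φ.toRingHom)
    (c : R)
    (Φc : Localization.Away c →+* LaurentPolynomial (Localization.Away c))
    (hext : ∀ r : R, (Φc (algebraMap R (Localization.Away c) r)).coeff =
      Finsupp.mapRange (algebraMap R (Localization.Away c))
        (map_zero (algebraMap R (Localization.Away c))) (Φ r).coeff)
    (d : ℤ) (hd : 0 < d)
    (u : (Localization.Away c)ˣ) (s : Localization.Away c) (hu : (u : Localization.Away c) = s)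
    (hsemi : Φc s = LaurentPolynomial.C s * LaurentPolynomial.T (-d))
    (hslice : ∀ a : Localization.Away c,
      (∀ k : ℤ, d ≤ |k| → (Φc a).coeff k = 0) → Φc a = LaurentPolynomial.C a) :
    Function.Bijective
      (fun p : LaurentPolynomial (invGmSubring Φc) =>
        p.coeff.sum fun k r => ((r : Localization.Away c)) * ((u ^ k : (Localization.Away c)ˣ) :
          Localization.Away c)) := by
  have hΦc : IsGmCoaction Φc := hΦ.of_localization (Submonoid.powers c) Φc
    (RingHom.ext fun r => AddMonoidAlgebra.ext (hext r))
  have hs : IsLocalSlice Φc d u := ⟨hd, hu ▸ hsemi, hslice⟩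
  have hsum : (fun p : LaurentPolynomial (invGmSubring Φc) =>
      p.coeff.sum fun k r => (r : Localization.Away c) * ↑(u ^ k)) =
        eval₂ (invGmSubring Φc).subtype u :=
    funext fun p => (eval₂_eq_sum (invGmSubring Φc).subtype u p).symm
  rw [hsum]
  exact hs.eval₂_subtype_bijective hΦc

/-- multiplicative local slice theorem, part (a): if `s ∈ R_c` is a local
slice of degree `d` with denominator the nonzero semi-invariant `c`, then the
`(R_c)^{G_m}`-algebra homomorphism `(R_c)^{G_m}[y^{±1}] → R_c` from the Laurent
polynomial ring sending `y` to `s` (here written out on a Laurent polynomial `p` as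
`Σ_k p_k s^k`) is an isomorphism. -/
theorem stmt13 {K R : Type*} [CommRing K] [CommRing R] [Algebra K R]
    (Φ : R →ₐ[K] LaurentPolynomial R) (hΦ : IsGmCoaction Φ.toRingHom)
    (c : R) (hc : c ≠ 0) (w : ℤ) (hw : Φ c = LaurentPolynomial.C c * LaurentPolynomial.T w)
    (Φc : Localization.Away c →+* LaurentPolynomial (Localization.Away c))
    (hext : ∀ r : R, (Φc (algebraMap R (Localization.Away c) r)).coeff =
      Finsupp.mapRange (algebraMap R (Localization.Away c))
        (map_zero (algebraMap R (Localization.Away c))) (Φ r).coeff)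
    (d : ℤ) (hd : 0 < d)
    (u : (Localization.Away c)ˣ) (s : Localization.Away c) (hu : (u : Localization.Away c) = s)
    (hsemi : Φc s = LaurentPolynomial.C s * LaurentPolynomial.T (-d))
    (hslice : ∀ a : Localization.Away c,
      (∀ k : ℤ, d ≤ |k| → (Φc a).coeff k = 0) → Φc a = LaurentPolynomial.C a) :
    Function.Bijective
      (fun p : LaurentPolynomial (invGmSubring Φc) =>
        p.coeff.sum fun k r => ((r : Localization.Away c)) * ((u ^ k : (Localization.Away c)ˣ) :
          Localization.Away c)) :=
  stmt13_general Φ hΦ c Φc hext d hd u s hu hsemi hslice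
end
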